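/- If X ~ Gamma(α, β) with shape α ≥ 2 and rate β > 0, then for every x > α/β, P(X ≥ x) ≤ exp(−2α·h(βx/α)), where h(t) = (t − 1 − log t)/2. -/

import Mathlib

/-!
Chernoff bound by exponential tilting: on `[x, ∞)` the `Gamma(a, b)` density is at most
`(b/s)^a e^{(s-b)x}` times the `Gamma(a, s)` density for any rate `0 < s ≤ b`, and the choice
`s = a/x` (admissible exactly when `x ≥ a/b`) turns this factor into `exp(-2a·h(bx/a))`.
-/

open MeasureTheory ProbabilityTheory Set Real

/-- `h(t) = (1/2)(t - 1 - log t)`. -/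
noncomputable def hFun (t : ℝ) : ℝ := (t - 1 - Real.log t) / 2

theorem gammaPDF_le_ofReal_mul_gammaPDF {a b s x y : ℝ} (ha : 0 < a) (hs : 0 < s) (hsb : s ≤ b)
    (hxy : x ≤ y) :
    gammaPDF a b y ≤ ENNReal.ofReal ((b / s) ^ a * exp ((s - b) * x)) * gammaPDF a s y := by
  rcases lt_or_ge y 0 with hy | hy
  · simp [gammaPDF_of_neg hy]
  have hb : 0 < b := hs.trans_le hsb
  rw [gammaPDF_of_nonneg hy, gammaPDF_of_nonneg hy, ← ENNReal.ofReal_mul (by positivity)]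
  refine ENNReal.ofReal_le_ofReal ?_
  have hb_split : b ^ a = (b / s) ^ a * s ^ a := by
    rw [← mul_rpow (by positivity) hs.le, div_mul_cancel₀ _ hs.ne']
  have hexp : exp (-(b * y)) ≤ exp ((s - b) * x) * exp (-(s * y)) := by
    rw [← exp_add, exp_le_exp]
    nlinarith [mul_nonneg (sub_nonneg.mpr hsb) (sub_nonneg.mpr hxy)]
  calc b ^ a / Gamma a * y ^ (a - 1) * exp (-(b * y))
      = (b / s) ^ a * (s ^ a / Gamma a * y ^ (a - 1)) * exp (-(b * y)) := by
        rw [hb_split]; ring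
    _ ≤ (b / s) ^ a * (s ^ a / Gamma a * y ^ (a - 1)) * (exp ((s - b) * x) * exp (-(s * y))) := by
        have := Gamma_pos_of_pos ha
        gcongr
    _ = (b / s) ^ a * exp ((s - b) * x) * (s ^ a / Gamma a * y ^ (a - 1) * exp (-(s * y))) := by
        ring

theorem gammaMeasure_Ici_le {a b s : ℝ} (ha : 0 < a) (hs : 0 < s) (hsb : s ≤ b) (x : ℝ) :
    gammaMeasure a b (Ici x) ≤ ENNReal.ofReal ((b / s) ^ a * exp ((s - b) * x)) := by
  set C := ENNReal.ofReal ((b / s) ^ a * exp ((s - b) * x))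
  rw [gammaMeasure, withDensity_apply _ measurableSet_Ici]
  calc ∫⁻ y in Ici x, gammaPDF a b y
      ≤ ∫⁻ y in Ici x, C * gammaPDF a s y :=
        setLIntegral_mono' measurableSet_Ici fun _ hy ↦
          gammaPDF_le_ofReal_mul_gammaPDF ha hs hsb hy
    _ = C * ∫⁻ y in Ici x, gammaPDF a s y :=
        lintegral_const_mul _ (measurable_gammaPDFReal a s).ennreal_ofReal
    _ ≤ C * ∫⁻ y, gammaPDF a s y := by gcongr; exact Measure.restrict_le_self
    _ = C := by rw [lintegral_gammaPDF_eq_one ha hs, mul_one]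

theorem div_rpow_mul_exp_eq_exp_hFun {a b x : ℝ} (ha : 0 < a) (hb : 0 < b) (hx : 0 < x) :
    (b / (a / x)) ^ a * exp ((a / x - b) * x) = exp (-2 * a * hFun (b * x / a)) := by
  have hbx : b / (a / x) = b * x / a := by field_simp
  rw [hbx, rpow_def_of_pos (by positivity), ← exp_add, hFun]
  congr 1
  field_simp
  ring

/-- Gamma upper tail bound (Harremoës): for `X ~ Gamma(a, b)` with shape `a ≥ 2` and
rate `b > 0`, for every `x > a/b`, `P(X ≥ x) ≤ exp(-2a·h(bx/a))`. -/
theorem gamma_tail_upper_bound (a b x : ℝ) (ha : 2 ≤ a) (hb : 0 < b) (hx : a / b < x) :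
    gammaMeasure a b (Set.Ici x) ≤ ENNReal.ofReal (Real.exp (-2 * a * hFun (b * x / a))) := by
  have ha0 : 0 < a := by linarith
  have hx0 : 0 < x := (div_pos ha0 hb).trans hx
  have hsb : a / x ≤ b := by
    rw [div_le_iff₀ hx0]; rw [div_lt_iff₀ hb] at hx; linarith
  rw [← div_rpow_mul_exp_eq_exp_hFun ha0 hb hx0]
  exact gammaMeasure_Ici_le ha0 (div_pos ha0 hx0) hsb x
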